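/- Let A:[0,T]→ℝ^{n×n}, B:[0,T]→ℝ^{n×m}, Q:[0,T]→𝒮ⁿ, R:[0,T]→𝒮ᵐ be continuous with Q(s) ≥ 0, R(s) ≥ δI (δ>0), and G ∈ 𝒮ⁿ with G ≥ 0. Let P be the solution of the Riccati equation Ṗ+PA+AᵀP+Q−PBR^{−1}BᵀP=0, P(T)=G, and let P₀ be the solution of the Lyapunov equation Ṗ₀+P₀A+AᵀP₀+Q=0, P₀(T)=G. Then 0 ≤ P(t) ≤ P₀(t) for all t ∈ [0,T]. -/

import Mathlib

/-!
Both inequalities are instances of one comparison principle for the Lyapunov equation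
`Ṡ = -(SA + AᵀS + N)`: if `N ≥ 0` on `[a, b]` and `S(b) ≥ 0`, then `S ≥ 0` on `[a, b]`.
It applies to `P` with the closed-loop matrix `A - BR⁻¹BᵀP` and `N = Q + PBR⁻¹BᵀP`,
and to `P₀ - P` with `A` and `N = PBR⁻¹BᵀP`.

The principle is a maximum-principle argument. If `N` and `S(b)` are positive definite but `S`
is not, take the last time `t₀` at which `S` fails to be positive definite: some `x ≠ 0` has
`S(t₀)x = 0` while `xᵀS(t)x ≥ 0` on `[t₀, b]`, yet `d/dt xᵀS(t)x = -xᵀN(t₀)x < 0` at `t₀`,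
because the terms `SA + AᵀS` vanish on the kernel of `S(t₀)`. The semidefinite case follows by
applying this to `S + εe^{K(b-t)}I`, which solves the Lyapunov equation with the positive definite
forcing `N + εe^{K(b-t)}(KI - A - Aᵀ)` once `K > 2 sup_{|x|=1} xᵀAx`, and letting `ε → 0`.
-/

open Set Matrix Filter Topology

attribute [local instance] Matrix.normedAddCommGroup Matrix.normedSpace

namespace Matrix

variable {ι : Type*} [Fintype ι]

lemma isCompact_setOf_dotProduct_self_eq_one : IsCompact {x : ι → ℝ | x ⬝ᵥ x = 1} := by
  refine (isCompact_closedBall (0 : ι → ℝ) 1).of_isClosed_subset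
    (isClosed_eq (continuous_id.dotProduct continuous_id) continuous_const) fun x hx => ?_
  rw [mem_closedBall_zero_iff, pi_norm_le_iff_of_nonneg zero_le_one]
  intro i
  rw [Real.norm_eq_abs, abs_le_one_iff_mul_self_le_one]
  exact hx ▸ Finset.single_le_sum (fun j _ => mul_self_nonneg (x j)) (Finset.mem_univ i)

lemma continuous_dotProduct_mulVec_self :
    Continuous fun p : Matrix ι ι ℝ × (ι → ℝ) => p.2 ⬝ᵥ p.1 *ᵥ p.2 :=
  continuous_snd.dotProduct (continuous_fst.matrix_mulVec continuous_snd)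

lemma _root_.ContinuousOn.dotProduct_mulVec_self_prod {X : Type*} [TopologicalSpace X]
    {S : X → Matrix ι ι ℝ} {s : Set X} (hS : ContinuousOn S s) (u : Set (ι → ℝ)) :
    ContinuousOn (fun p : X × (ι → ℝ) => p.2 ⬝ᵥ S p.1 *ᵥ p.2) (s ×ˢ u) :=
  continuous_dotProduct_mulVec_self.comp_continuousOn
    ((hS.comp continuousOn_fst fun _ hp => hp.1).prodMk continuousOn_snd)

lemma IsHermitian.posDef_iff_forall_dotProduct_self_eq_one {M : Matrix ι ι ℝ}
    (hM : M.IsHermitian) : M.PosDef ↔ ∀ x : ι → ℝ, x ⬝ᵥ x = 1 → 0 < x ⬝ᵥ M *ᵥ x := by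
  refine ⟨fun h x hx => ?_, fun h => .of_dotProduct_mulVec_pos hM fun x hx => ?_⟩
  · have hx0 : x ≠ 0 := by rintro rfl; simp at hx
    simpa using h.dotProduct_mulVec_pos hx0
  · have hxx : 0 < x ⬝ᵥ x := by
      simpa using dotProduct_star_self_pos_iff.mpr hx
    set r := (Real.sqrt (x ⬝ᵥ x))⁻¹
    have hr : r * r * (x ⬝ᵥ x) = 1 := by
      rw [← mul_inv, Real.mul_self_sqrt hxx.le, inv_mul_cancel₀ hxx.ne']
    have hpos := h (r • x) (by simpa [mul_assoc] using hr)
    simp only [mulVec_smul, dotProduct_smul, smul_dotProduct, smul_eq_mul] at hpos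
    simp only [star_trivial]
    nlinarith [mul_self_nonneg r]

lemma IsSymm.dotProduct_mulVec_lyapunov_of_mulVec_eq_zero {R : Type*} [CommSemiring R]
    {S : Matrix ι ι R} (hS : S.IsSymm) (A N : Matrix ι ι R) {x : ι → R} (hx : S *ᵥ x = 0) :
    x ⬝ᵥ (S * A + Aᵀ * S + N) *ᵥ x = x ⬝ᵥ N *ᵥ x := by
  have hxS : x ᵥ* S = 0 := by rw [← mulVec_transpose, hS.eq, hx]
  simp only [add_mulVec, dotProduct_add, ← mulVec_mulVec, hx, mulVec_zero, dotProduct_zero,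
    dotProduct_mulVec x S, hxS, zero_dotProduct, zero_add]

lemma _root_.HasDerivWithinAt.dotProduct_mulVec {S : ℝ → Matrix ι ι ℝ} {S' : Matrix ι ι ℝ}
    {s : Set ℝ} {t : ℝ} (h : HasDerivWithinAt S S' s t) (x y : ι → ℝ) :
    HasDerivWithinAt (fun t => x ⬝ᵥ S t *ᵥ y) (x ⬝ᵥ S' *ᵥ y) s t := by
  let L : Matrix ι ι ℝ →L[ℝ] ℝ := LinearMap.toContinuousLinearMap
    { toFun := fun M => x ⬝ᵥ M *ᵥ y
      map_add' := fun M N => by simp only [add_mulVec, dotProduct_add]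
      map_smul' := fun c M => by simp only [smul_mulVec, dotProduct_smul, RingHom.id_apply] }
  exact L.hasFDerivAt.comp_hasDerivWithinAt t h

lemma exists_dotProduct_mulVec_le_of_continuousOn {X : Type*} [TopologicalSpace X]
    {A : X → Matrix ι ι ℝ} {s : Set X} (hs : IsCompact s) (hA : ContinuousOn A s) :
    ∃ C, ∀ t ∈ s, ∀ x : ι → ℝ, x ⬝ᵥ x = 1 → x ⬝ᵥ A t *ᵥ x ≤ C := by
  obtain ⟨C, hC⟩ := (hs.prod isCompact_setOf_dotProduct_self_eq_one).bddAbove_image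
    (hA.dotProduct_mulVec_self_prod _)
  exact ⟨C, fun t ht x hx => hC ⟨(t, x), ⟨ht, hx⟩, rfl⟩⟩

lemma posDef_smul_one_sub_sub_transpose [DecidableEq ι] {M : Matrix ι ι ℝ} {C : ℝ}
    (hM : ∀ x : ι → ℝ, x ⬝ᵥ x = 1 → x ⬝ᵥ M *ᵥ x ≤ C) : ((2 * C + 1) • 1 - M - Mᵀ).PosDef := by
  have hsymm : ((2 * C + 1) • 1 - M - Mᵀ).IsSymm := by
    simp only [IsSymm, transpose_sub, transpose_smul, transpose_one, transpose_transpose]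
    abel
  refine (isHermitian_iff_isSymm.mpr hsymm).posDef_iff_forall_dotProduct_self_eq_one.mpr
    fun x hx => ?_
  have hMt : x ⬝ᵥ Mᵀ *ᵥ x = x ⬝ᵥ M *ᵥ x := by
    rw [mulVec_transpose, dotProduct_mulVec, dotProduct_comm]
  simp only [sub_mulVec, smul_mulVec, one_mulVec, dotProduct_sub, dotProduct_smul, hx, hMt,
    smul_eq_mul]
  linarith [hM x hx]

lemma exists_mulVec_eq_zero_isMinOn_of_not_posDef {S : ℝ → Matrix ι ι ℝ} {a b : ℝ}
    (hS : ContinuousOn S (Icc a b)) (hsymm : ∀ t ∈ Icc a b, (S t).IsSymm) (hb : (S b).PosDef)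
    {t₁ : ℝ} (ht₁ : t₁ ∈ Icc a b) (ht₁' : ¬(S t₁).PosDef) :
    ∃ t₀ ∈ Ico a b, ∃ x ≠ 0, S t₀ *ᵥ x = 0 ∧ IsMinOn (fun t => x ⬝ᵥ S t *ᵥ x) (Icc t₀ b) t₀ := by
  have hposDef_iff t (ht : t ∈ Icc a b) :=
    (isHermitian_iff_isSymm.mpr (hsymm t ht)).posDef_iff_forall_dotProduct_self_eq_one
  set U := Icc a b ×ˢ {x : ι → ℝ | x ⬝ᵥ x = 1}
  -- the times at which `S` is not positive definite
  set F := Prod.fst '' (U ∩ (fun p => p.2 ⬝ᵥ S p.1 *ᵥ p.2) ⁻¹' Iic 0)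
  have hF : IsCompact F := by
    have hU : IsCompact U := isCompact_Icc.prod isCompact_setOf_dotProduct_self_eq_one
    have hclosed := (hS.dotProduct_mulVec_self_prod _).preimage_isClosed_of_isClosed
      hU.isClosed (isClosed_Iic (a := 0))
    exact (hU.of_isClosed_subset hclosed inter_subset_left).image continuous_fst
  have hF₁ : t₁ ∈ F := by
    obtain ⟨x, hx, hqx⟩ : ∃ x, x ⬝ᵥ x = 1 ∧ x ⬝ᵥ S t₁ *ᵥ x ≤ 0 := by
      simpa [hposDef_iff t₁ ht₁] using ht₁'
    exact ⟨(t₁, x), ⟨⟨ht₁, hx⟩, hqx⟩, rfl⟩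
  obtain ⟨⟨t₀, x⟩, ⟨⟨ht₀, hx⟩, hqx⟩, ht₀_eq⟩ := hF.sSup_mem ⟨t₁, hF₁⟩
  simp only at ht₀_eq
  have hposDef_after : ∀ t ∈ Ioc t₀ b, (S t).PosDef := by
    intro t ht
    have htab : t ∈ Icc a b := ⟨ht₀.1.trans ht.1.le, ht.2⟩
    refine (hposDef_iff t htab).mpr fun y hy => not_le.mp fun hqy => ?_
    exact ht.1.not_ge (ht₀_eq ▸ le_csSup hF.bddAbove ⟨(t, y), ⟨⟨htab, hy⟩, hqy⟩, rfl⟩)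
  have ht₀b : t₀ ≠ b := by
    rintro rfl
    exact hqx.not_gt ((hposDef_iff t₀ ht₀).mp hb x hx)
  have hnonneg : ∀ t ∈ Icc t₀ b, ∀ y, 0 ≤ y ⬝ᵥ S t *ᵥ y := by
    intro t ht y
    refine le_on_closure (f := fun _ => 0) (g := fun t => y ⬝ᵥ S t *ᵥ y)
      (fun s hs => by simpa using (hposDef_after s hs).posSemidef.dotProduct_mulVec_nonneg y)
      continuousOn_const ?_ (closure_Ioc ht₀b ▸ ht)
    rw [closure_Ioc ht₀b]
    exact continuous_dotProduct_mulVec_self.comp_continuousOn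
      ((hS.mono (Icc_subset_Icc_left ht₀.1)).prodMk continuousOn_const)
  have hpsd : (S t₀).PosSemidef :=
    .of_dotProduct_mulVec_nonneg (isHermitian_iff_isSymm.mpr (hsymm t₀ ht₀))
      fun y => by simpa using hnonneg t₀ (left_mem_Icc.mpr ht₀.2) y
  have hq0 : x ⬝ᵥ S t₀ *ᵥ x = 0 :=
    le_antisymm hqx (by simpa using hpsd.dotProduct_mulVec_nonneg x)
  refine ⟨t₀, ⟨ht₀.1, lt_of_le_of_ne ht₀.2 ht₀b⟩, x, by rintro rfl; simp at hx,
    (hpsd.dotProduct_mulVec_zero_iff x).mp (by simpa using hq0), fun t ht => ?_⟩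
  simpa [hq0] using hnonneg t ht x

variable {A N S : ℝ → Matrix ι ι ℝ} {a b : ℝ}

theorem posDef_of_hasDerivWithinAt_lyapunov
    (hS : ∀ t ∈ Icc a b, HasDerivWithinAt S (-(S t * A t + (A t)ᵀ * S t + N t)) (Icc a b) t)
    (hsymm : ∀ t ∈ Icc a b, (S t).IsSymm) (hN : ∀ t ∈ Icc a b, (N t).PosDef)
    (hb : (S b).PosDef) : ∀ t ∈ Icc a b, (S t).PosDef := by
  by_contra! ⟨t₁, ht₁, ht₁'⟩
  obtain ⟨t₀, ht₀, x, hx, hker, hmin⟩ := exists_mulVec_eq_zero_isMinOn_of_not_posDef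
    (fun t ht => (hS t ht).continuousWithinAt) hsymm hb ht₁ ht₁'
  have ht₀ab : t₀ ∈ Icc a b := Ico_subset_Icc_self ht₀
  have hderiv := ((hS t₀ ht₀ab).mono (Icc_subset_Icc_left ht₀.1)).dotProduct_mulVec x x
  rw [neg_mulVec, dotProduct_neg,
    (hsymm t₀ ht₀ab).dotProduct_mulVec_lyapunov_of_mulVec_eq_zero _ _ hker] at hderiv
  have hslope := hmin.localize.hasFDerivWithinAt_nonneg hderiv.hasFDerivWithinAt
    (sub_mem_posTangentConeAt_of_segment_subset (segment_eq_Icc ht₀.2.le).subset)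
  have hNx : 0 < x ⬝ᵥ N t₀ *ᵥ x := by simpa using (hN t₀ ht₀ab).dotProduct_mulVec_pos hx
  rw [ContinuousLinearMap.toSpanSingleton_apply, smul_eq_mul] at hslope
  nlinarith [ht₀.2]

theorem posSemidef_of_hasDerivWithinAt_lyapunov [DecidableEq ι]
    (hA : ContinuousOn A (Icc a b))
    (hS : ∀ t ∈ Icc a b, HasDerivWithinAt S (-(S t * A t + (A t)ᵀ * S t + N t)) (Icc a b) t)
    (hsymm : ∀ t ∈ Icc a b, (S t).IsSymm) (hN : ∀ t ∈ Icc a b, (N t).PosSemidef)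
    (hb : (S b).PosSemidef) : ∀ t ∈ Icc a b, (S t).PosSemidef := by
  obtain ⟨C, hC⟩ := exists_dotProduct_mulVec_le_of_continuousOn isCompact_Icc hA
  set K := 2 * C + 1
  have hpert : ∀ ε > 0, ∀ t ∈ Icc a b, (S t + (ε * Real.exp (K * (b - t))) • 1).PosDef := by
    intro ε hε
    refine posDef_of_hasDerivWithinAt_lyapunov (A := A)
      (N := fun t => N t + (ε * Real.exp (K * (b - t))) • (K • 1 - A t - (A t)ᵀ))
      (fun t ht => ?_) (fun t ht => (hsymm t ht).add (isSymm_one.smul _))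
      (fun t ht => PosDef.posSemidef_add (hN t ht)
        ((posDef_smul_one_sub_sub_transpose (hC t ht)).smul (by positivity)))
      (PosDef.posSemidef_add hb (PosDef.one.smul (by positivity)))
    have hc : HasDerivAt (fun t => ε * Real.exp (K * (b - t)))
        (ε * (Real.exp (K * (b - t)) * (K * -1))) t :=
      ((((hasDerivAt_id t).const_sub b).const_mul K).exp).const_mul ε
    refine ((hS t ht).add (hc.smul_const (1 : Matrix ι ι ℝ)).hasDerivWithinAt).congr_deriv ?_
    simp only [Matrix.mul_add, Matrix.add_mul, Matrix.mul_smul, Matrix.smul_mul, Matrix.mul_one,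
      Matrix.one_mul]
    module
  intro t ht
  refine .of_dotProduct_mulVec_nonneg (isHermitian_iff_isSymm.mpr (hsymm t ht)) fun y => ?_
  have hlim : Tendsto (fun ε => y ⬝ᵥ S t *ᵥ y + ε * Real.exp (K * (b - t)) * (y ⬝ᵥ y))
      (𝓝[>] 0) (𝓝 (y ⬝ᵥ S t *ᵥ y)) :=
    ((Continuous.tendsto' (by fun_prop) 0 _ (by simp))).mono_left nhdsWithin_le_nhds
  refine star_trivial y ▸ ge_of_tendsto hlim (eventually_nhdsWithin_of_forall fun ε hε => ?_)
  simpa [add_mulVec, smul_mulVec, dotProduct_add, dotProduct_smul, mul_assoc]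
    using (hpert ε hε t ht).posSemidef.dotProduct_mulVec_nonneg y

end Matrix

section
variable {X : Type*} [TopologicalSpace X] {s : Set X} {k l m : Type*} [Fintype l]

lemma ContinuousOn.matrix_mul {f : X → Matrix k l ℝ} {g : X → Matrix l m ℝ}
    (hf : ContinuousOn f s) (hg : ContinuousOn g s) : ContinuousOn (fun x => f x * g x) s :=
  (continuous_fst.matrix_mul continuous_snd).comp_continuousOn (hf.prodMk hg)

lemma ContinuousOn.matrix_inv [DecidableEq l] {f : X → Matrix l l ℝ} (hf : ContinuousOn f s)
    (hdet : ∀ x ∈ s, (f x).det ≠ 0) : ContinuousOn (fun x => (f x)⁻¹) s := fun x hx =>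
  (continuousAt_matrix_inv _ (NormedRing.inverse_continuousAt (Units.mk0 _ (hdet x hx))))
    |>.comp_continuousWithinAt (hf x hx)

end

namespace Matrix

variable {k l R : Type*} [Fintype k] [Fintype l] [DecidableEq l]

lemma PosSemidef.posSemidef_mul_mul_inv_mul_transpose_mul [CommRing R] [PartialOrder R]
    [StarRing R] [TrivialStar R] {P : Matrix k k R} {B : Matrix k l R} {W : Matrix l l R}
    (hW : W.PosSemidef) (hP : P.IsSymm) :
    (P * B * W⁻¹ * Bᵀ * P).PosSemidef := by
  simpa [conjTranspose_eq_transpose_of_trivial, transpose_mul, hP.eq, Matrix.mul_assoc]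
    using hW.inv.conjTranspose_mul_mul_same (Bᵀ * P)

lemma lyapunov_closedLoop_eq_riccati [CommRing R] {P A Q : Matrix k k R} {B : Matrix k l R}
    {W : Matrix l l R} (hP : P.IsSymm) (hW : W⁻¹.IsSymm) :
    P * (A - B * W⁻¹ * Bᵀ * P) + (A - B * W⁻¹ * Bᵀ * P)ᵀ * P + (Q + P * B * W⁻¹ * Bᵀ * P) =
      P * A + Aᵀ * P + Q - P * B * W⁻¹ * Bᵀ * P := by
  simp only [transpose_sub, transpose_mul, transpose_transpose, hP.eq, hW.eq, Matrix.mul_sub,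
    Matrix.sub_mul, Matrix.mul_assoc]
  abel

end Matrix

theorem stmt_9_general (n m : ℕ) (T δ : ℝ) (hδ : 0 < δ)
    (A : ℝ → Matrix (Fin n) (Fin n) ℝ) (B : ℝ → Matrix (Fin n) (Fin m) ℝ)
    (Q : ℝ → Matrix (Fin n) (Fin n) ℝ) (R : ℝ → Matrix (Fin m) (Fin m) ℝ)
    (G : Matrix (Fin n) (Fin n) ℝ)
    (hA : ContinuousOn A (Icc 0 T)) (hB : ContinuousOn B (Icc 0 T))
    (hRc : ContinuousOn R (Icc 0 T))
    (hQ : ∀ s ∈ Icc (0:ℝ) T, (Q s).PosSemidef)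
    (hR : ∀ s ∈ Icc (0:ℝ) T, (R s - δ • (1 : Matrix (Fin m) (Fin m) ℝ)).PosSemidef)
    (hG : G.PosSemidef)
    (P P0 : ℝ → Matrix (Fin n) (Fin n) ℝ)
    (hP : ∀ s ∈ Icc (0:ℝ) T,
      HasDerivWithinAt P
        (-(P s * A s + (A s)ᵀ * P s + Q s - P s * B s * (R s)⁻¹ * (B s)ᵀ * P s))
        (Icc 0 T) s)
    (hPT : P T = G)
    (hPs : ∀ s ∈ Icc (0:ℝ) T, (P s).IsSymm)
    (hP0 : ∀ s ∈ Icc (0:ℝ) T,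
      HasDerivWithinAt P0 (-(P0 s * A s + (A s)ᵀ * P0 s + Q s)) (Icc 0 T) s)
    (hP0T : P0 T = G)
    (hP0s : ∀ s ∈ Icc (0:ℝ) T, (P0 s).IsSymm) :
    ∀ t ∈ Icc (0:ℝ) T, (P t).PosSemidef ∧ (P0 t - P t).PosSemidef := by
  have hRpos : ∀ s ∈ Icc (0:ℝ) T, (R s).PosDef := fun s hs => by
    simpa using PosDef.posSemidef_add (hR s hs) (PosDef.one.smul hδ)
  set Γ := fun s => P s * B s * (R s)⁻¹ * (B s)ᵀ * P s
  have hΓ : ∀ s ∈ Icc (0:ℝ) T, (Γ s).PosSemidef := fun s hs =>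
    (hRpos s hs).posSemidef.posSemidef_mul_mul_inv_mul_transpose_mul (hPs s hs)
  have hRinv : ContinuousOn (fun s => (R s)⁻¹) (Icc 0 T) :=
    hRc.matrix_inv fun s hs => (hRpos s hs).det_pos.ne'
  have hPc : ContinuousOn P (Icc 0 T) := fun s hs => (hP s hs).continuousWithinAt
  have hP_psd := posSemidef_of_hasDerivWithinAt_lyapunov
    (A := fun s => A s - B s * (R s)⁻¹ * (B s)ᵀ * P s) (N := fun s => Q s + Γ s)
    (hA.sub (((hB.matrix_mul hRinv).matrix_mul
      (continuous_id.matrix_transpose.comp_continuousOn hB)).matrix_mul hPc))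
    (fun s hs => (hP s hs).congr_deriv (by
      rw [lyapunov_closedLoop_eq_riccati (hPs s hs)
        (isHermitian_iff_isSymm.mp (hRpos s hs).isHermitian.inv)]))
    hPs (fun s hs => (hQ s hs).add (hΓ s hs)) (hPT ▸ hG)
  have hgap_psd := posSemidef_of_hasDerivWithinAt_lyapunov (S := fun s => P0 s - P s) (N := Γ) hA
    (fun s hs => ((hP0 s hs).sub (hP s hs)).congr_deriv
      (by simp only [Γ, Matrix.sub_mul, Matrix.mul_sub]; abel))
    (fun s hs => (hP0s s hs).sub (hPs s hs)) hΓ (by simp [hP0T, hPT, PosSemidef.zero])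
  exact fun t ht => ⟨hP_psd t ht, hgap_psd t ht⟩

/-- if `P` solves the Riccati equation
`Ṗ + PA + AᵀP + Q − PBR⁻¹BᵀP = 0`, `P(T) = G`, and `P₀` solves the Lyapunov equation
`Ṗ₀ + P₀A + AᵀP₀ + Q = 0`, `P₀(T) = G`, then `0 ≤ P(t) ≤ P₀(t)` on `[0,T]`. -/
theorem stmt_9 (n m : ℕ) (T δ : ℝ) (hT : 0 < T) (hδ : 0 < δ)
    (A : ℝ → Matrix (Fin n) (Fin n) ℝ) (B : ℝ → Matrix (Fin n) (Fin m) ℝ)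
    (Q : ℝ → Matrix (Fin n) (Fin n) ℝ) (R : ℝ → Matrix (Fin m) (Fin m) ℝ)
    (G : Matrix (Fin n) (Fin n) ℝ)
    (hA : ContinuousOn A (Icc 0 T)) (hB : ContinuousOn B (Icc 0 T))
    (hQc : ContinuousOn Q (Icc 0 T)) (hRc : ContinuousOn R (Icc 0 T))
    (hQ : ∀ s ∈ Icc (0:ℝ) T, (Q s).PosSemidef)
    (hR : ∀ s ∈ Icc (0:ℝ) T, (R s - δ • (1 : Matrix (Fin m) (Fin m) ℝ)).PosSemidef)
    (hG : G.PosSemidef)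
    (P P0 : ℝ → Matrix (Fin n) (Fin n) ℝ)
    (hP : ∀ s ∈ Icc (0:ℝ) T,
      HasDerivWithinAt P
        (-(P s * A s + (A s)ᵀ * P s + Q s - P s * B s * (R s)⁻¹ * (B s)ᵀ * P s))
        (Icc 0 T) s)
    (hPT : P T = G)
    (hPs : ∀ s ∈ Icc (0:ℝ) T, (P s).IsSymm)
    (hP0 : ∀ s ∈ Icc (0:ℝ) T,
      HasDerivWithinAt P0 (-(P0 s * A s + (A s)ᵀ * P0 s + Q s)) (Icc 0 T) s)
    (hP0T : P0 T = G)
    (hP0s : ∀ s ∈ Icc (0:ℝ) T, (P0 s).IsSymm) :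
    ∀ t ∈ Icc (0:ℝ) T, (P t).PosSemidef ∧ (P0 t - P t).PosSemidef :=
  stmt_9_general n m T δ hδ A B Q R G hA hB hRc hQ hR hG P P0 hP hPT hPs hP0 hP0T hP0s
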